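/- arXiv:2407.11628 — 5 statements merged into one kernel-verified Lean document; each statement's English description precedes it below -/
import Mathlib

section
/- Let p, q be natural numbers and let A be an invertible real p×p matrix, B a real p×q matrix, C a real q×p matrix, D a real q×q matrix, and Ŝ an invertible real q×q matrix. Let 𝒜 be the (p+q)×(p+q) block matrix [[A, B], [C, D]] and let 𝒫 be the block triangular matrix [[A, B], [0, Ŝ]]. Then 𝒫 is invertible and 𝒜𝒫⁻¹ equals the block matrix [[I, 0], [C A⁻¹, (D − C A⁻¹ B) Ŝ⁻¹]], where D − C A⁻¹ B is the Schur complement of the block A in 𝒜. -/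
open Matrix

/-- For an invertible `p×p` block `A`, arbitrary blocks `B`, `C`, `D`, and an
invertible `q×q` matrix `Shat`, the block triangular matrix `𝒫 = [[A, B], [0, Shat]]` is invertible
and `𝒜 𝒫⁻¹ = [[I, 0], [C A⁻¹, (D - C A⁻¹ B) Shat⁻¹]]` where `𝒜 = [[A, B], [C, D]]`. -/
theorem block_triangular_preconditioned_form
    (p q : ℕ)
    (A : Matrix (Fin p) (Fin p) ℝ) (B : Matrix (Fin p) (Fin q) ℝ)
    (C : Matrix (Fin q) (Fin p) ℝ) (D : Matrix (Fin q) (Fin q) ℝ)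
    (Shat : Matrix (Fin q) (Fin q) ℝ)
    (hA : IsUnit A.det) (hShat : IsUnit Shat.det) :
    IsUnit (Matrix.fromBlocks A B 0 Shat).det ∧
    Matrix.fromBlocks A B C D * (Matrix.fromBlocks A B 0 Shat)⁻¹ =
      Matrix.fromBlocks 1 0 (C * A⁻¹) ((D - C * A⁻¹ * B) * Shat⁻¹) := by
  constructor
  · rw [det_fromBlocks_zero₂₁]
    exact hA.mul hShat
  · rw [inv_fromBlocks_zero₂₁_of_isUnit_iff A B Shat
      ⟨fun _ => (isUnit_iff_isUnit_det _).mpr hShat, fun _ => (isUnit_iff_isUnit_det _).mpr hA⟩,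
      fromBlocks_multiply, Matrix.mul_zero, Matrix.mul_zero, add_zero, add_zero,
      mul_nonsing_inv _ hA, Matrix.mul_neg, Matrix.mul_neg]
    have h1 : A * (A⁻¹ * B * Shat⁻¹) = B * Shat⁻¹ := by
      rw [← Matrix.mul_assoc, ← Matrix.mul_assoc, mul_nonsing_inv _ hA, Matrix.one_mul]
    have h2 : C * (A⁻¹ * B * Shat⁻¹) = C * A⁻¹ * B * Shat⁻¹ := by
      rw [← Matrix.mul_assoc, ← Matrix.mul_assoc]
    rw [h1, h2, neg_add_cancel, neg_add_eq_sub, ← sub_mul]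
end

section
/- Let n, m be natural numbers, β a nonzero real number, K an invertible real n×n matrix, M a real n×n matrix, M_Γ an invertible real m×m matrix, and N a real n×m matrix. Set A = [[K, −N], [0, β·M_Γ]] (an (n+m)×(n+m) block matrix), B the (n+m)×n block column [[0], [−Nᵀ]], C the n×(n+m) block row [M, 0], and D = K. Then A is invertible and the Schur complement D − C A⁻¹ B equals K + (1/β)·M K⁻¹ N M_Γ⁻¹ Nᵀ. -/
/-! `A` is block upper-triangular, so `A⁻¹ = [[K⁻¹, K⁻¹ N (β M_Γ)⁻¹], [0, (β M_Γ)⁻¹]]`; since `C`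
only sees the first block column and `B` only the second block row, `C A⁻¹ B` is the
off-diagonal block sandwiched between `M` and `-Nᵀ`, namely `-β⁻¹ M K⁻¹ N M_Γ⁻¹ Nᵀ`. -/

open Matrix

namespace Matrix

variable {l m n p α : Type*} [Fintype m] [DecidableEq m] [Fintype n] [DecidableEq n] [CommRing α]

theorem fromCols_zero_mul_inv_fromBlocks_zero₂₁_mul_fromRows_zero
    (C : Matrix l m α) (A : Matrix m m α) (B : Matrix m n α) (D : Matrix n n α)
    (E : Matrix n p α) (hAD : IsUnit A ↔ IsUnit D) :
    fromCols C (0 : Matrix l n α) * (fromBlocks A B 0 D)⁻¹ * fromRows (0 : Matrix m p α) E =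
      -(C * A⁻¹ * B * D⁻¹ * E) := by
  rw [inv_fromBlocks_zero₂₁_of_isUnit_iff A B D hAD, fromCols_mul_fromBlocks,
    fromCols_mul_fromRows]
  simp only [Matrix.mul_zero, Matrix.zero_mul, add_zero, zero_add, Matrix.mul_neg,
    Matrix.neg_mul, Matrix.mul_assoc]

end Matrix

/-- For the permuted saddle point system with blocks
`A = [[K, −N], [0, β·M_Γ]]`, `B = [[0], [−Nᵀ]]`, `C = [M, 0]`, `D = K`,
the block `A` is invertible and the Schur complement `D − C A⁻¹ B` equals
`K + (1/β)·M K⁻¹ N M_Γ⁻¹ Nᵀ`. -/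
theorem schur_complement_permuted_saddle
    (n m : ℕ) (β : ℝ) (hβ : β ≠ 0)
    (K : Matrix (Fin n) (Fin n) ℝ) (hK : IsUnit K.det)
    (M : Matrix (Fin n) (Fin n) ℝ)
    (MΓ : Matrix (Fin m) (Fin m) ℝ) (hMΓ : IsUnit MΓ.det)
    (N : Matrix (Fin n) (Fin m) ℝ) :
    IsUnit (Matrix.fromBlocks K (-N) 0 (β • MΓ)).det ∧
    K - Matrix.fromCols M (0 : Matrix (Fin n) (Fin m) ℝ) * (Matrix.fromBlocks K (-N) 0 (β • MΓ))⁻¹ *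
        Matrix.fromRows (0 : Matrix (Fin n) (Fin n) ℝ) (-Nᵀ) =
      K + (1 / β) • (M * K⁻¹ * N * MΓ⁻¹ * Nᵀ) := by
  have hβMΓ : IsUnit (β • MΓ).det := by
    rw [det_smul]
    exact ((isUnit_iff_ne_zero.mpr hβ).pow _).mul hMΓ
  have hβMΓ_inv : (β • MΓ)⁻¹ = β⁻¹ • MΓ⁻¹ := MΓ.inv_smul' (Units.mk0 β hβ) hMΓ
  refine ⟨by rw [det_fromBlocks_zero₂₁]; exact hK.mul hβMΓ, ?_⟩
  have hunits : IsUnit K ↔ IsUnit (β • MΓ) := by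
    simp only [isUnit_iff_isUnit_det, hK, hβMΓ]
  rw [fromCols_zero_mul_inv_fromBlocks_zero₂₁_mul_fromRows_zero _ _ _ _ _ hunits, hβMΓ_inv]
  simp only [Matrix.mul_neg, Matrix.neg_mul, neg_neg, Matrix.mul_smul, smul_neg, sub_neg_eq_add,
    Matrix.smul_mul, one_div]
end

section
/- Let n be a natural number, β a nonzero real number, K_M a symmetric positive definite real n×n matrix, M_γ a symmetric real n×n matrix, μ₀ a real number, and x a nonzero vector in ℝⁿ with (I + (1/β)·K_M M_γ)x = μ₀·x. Then μ₀ = 1 + (xᵀ M_γ x)/(β · xᵀ K_M⁻¹ x). -/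
open Matrix

/-- If `K_M` is symmetric positive definite, `M_γ` is symmetric, and
`x ≠ 0` satisfies `(I + (1/β)·K_M M_γ)x = μ₀·x`, then
`μ₀ = 1 + (xᵀ M_γ x)/(β · xᵀ K_M⁻¹ x)`. -/
theorem eigenvalue_formula_preconditioned_schur
    (n : ℕ) (β : ℝ) (hβ : β ≠ 0)
    (KM : Matrix (Fin n) (Fin n) ℝ) (hKM : KM.PosDef)
    (Mγ : Matrix (Fin n) (Fin n) ℝ) (hMγ : Mγ.IsSymm)
    (μ₀ : ℝ) (x : Fin n → ℝ) (hx : x ≠ 0)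
    (heig : (1 + (1 / β) • (KM * Mγ)) *ᵥ x = μ₀ • x) :
    μ₀ = 1 + (x ⬝ᵥ (Mγ *ᵥ x)) / (β * (x ⬝ᵥ (KM⁻¹ *ᵥ x))) := by
  have hinv : KM⁻¹.PosDef := hKM.inv
  have hpos : 0 < x ⬝ᵥ (KM⁻¹ *ᵥ x) := by
    have := hinv.dotProduct_mulVec_pos hx
    simpa using this
  -- From heig: (KM * Mγ) *ᵥ x = (β * (μ₀ - 1)) • x
  have h1 : (KM * Mγ) *ᵥ x = (β * (μ₀ - 1)) • x := by
    have h := heig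
    rw [add_mulVec, smul_mulVec, one_mulVec] at h
    have h2 : (1 / β) • ((KM * Mγ) *ᵥ x) = μ₀ • x - x := by
      rw [← h]; abel
    have h3 : (KM * Mγ) *ᵥ x = β • (μ₀ • x - x) := by
      rw [← h2, smul_smul]
      field_simp
      rw [one_smul]
    rw [h3]
    ext i
    simp [mul_sub, sub_mul, mul_comm, mul_assoc, mul_left_comm]
  -- Multiply by KM⁻¹
  have hKMinv : IsUnit KM.det := isUnit_iff_ne_zero.mpr hKM.det_pos.ne'
  have h4 : Mγ *ᵥ x = (β * (μ₀ - 1)) • (KM⁻¹ *ᵥ x) := by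
    have := congrArg (fun v => KM⁻¹ *ᵥ v) h1
    simp only [← mulVec_mulVec] at this
    rw [show KM⁻¹ *ᵥ (KM *ᵥ (Mγ *ᵥ x)) = Mγ *ᵥ x by
      rw [mulVec_mulVec, Matrix.nonsing_inv_mul _ hKMinv, one_mulVec]] at this
    rw [this, mulVec_smul]
  have h5 : x ⬝ᵥ (Mγ *ᵥ x) = (β * (μ₀ - 1)) * (x ⬝ᵥ (KM⁻¹ *ᵥ x)) := by
    rw [h4, dotProduct_smul, smul_eq_mul]
  have hd : β * (x ⬝ᵥ (KM⁻¹ *ᵥ x)) ≠ 0 := mul_ne_zero hβ hpos.ne'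
  rw [h5, show β * (μ₀ - 1) * (x ⬝ᵥ (KM⁻¹ *ᵥ x)) = (μ₀ - 1) * (β * (x ⬝ᵥ (KM⁻¹ *ᵥ x))) by ring,
    mul_div_assoc, div_self hd, mul_one]
  ring
end

section
/- Let n be a natural number, h a positive real number, K and M symmetric real n×n matrices, and c₃, c₄, d₁, d₂ positive real constants such that c₃h² ≤ (xᵀ M x)/(xᵀ x) ≤ c₄h² and d₁h² ≤ (xᵀ K x)/(xᵀ x) ≤ d₂ for all nonzero x ∈ ℝⁿ. Then M and K are invertible and (d₁²/c₄)·h² ≤ (xᵀ K M⁻¹ K x)/(xᵀ x) ≤ (d₂²/c₃)·h⁻² for all nonzero x ∈ ℝⁿ. -/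
open Matrix

lemma aux_dp_self_nonneg {n : ℕ} (x : Fin n → ℝ) : 0 ≤ x ⬝ᵥ x :=
  Finset.sum_nonneg fun _ _ => mul_self_nonneg _

lemma aux_dp_self_pos {n : ℕ} {x : Fin n → ℝ} (hx : x ≠ 0) : 0 < x ⬝ᵥ x :=
  lt_of_le_of_ne (aux_dp_self_nonneg x) fun he =>
    hx (dotProduct_self_eq_zero.mp he.symm)

lemma aux_cs {n : ℕ} (x y : Fin n → ℝ) : (x ⬝ᵥ y) ^ 2 ≤ (x ⬝ᵥ x) * (y ⬝ᵥ y) := by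
  simpa [dotProduct, sq] using Finset.sum_mul_sq_le_sq_mul_sq Finset.univ x y

lemma aux_symm_dp {n : ℕ} {N : Matrix (Fin n) (Fin n) ℝ} (hN : N.IsSymm)
    (x y : Fin n → ℝ) : x ⬝ᵥ (N *ᵥ y) = (N *ᵥ x) ⬝ᵥ y := by
  rw [dotProduct_mulVec, ← mulVec_transpose, hN.eq]

lemma aux_psd_cs {n : ℕ} {N : Matrix (Fin n) (Fin n) ℝ} (hN : N.IsSymm)
    (hpsd : ∀ u : Fin n → ℝ, 0 ≤ u ⬝ᵥ (N *ᵥ u)) (u v : Fin n → ℝ) :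
    (u ⬝ᵥ (N *ᵥ v)) ^ 2 ≤ (u ⬝ᵥ (N *ᵥ u)) * (v ⬝ᵥ (N *ᵥ v)) := by
  have hsym : v ⬝ᵥ (N *ᵥ u) = u ⬝ᵥ (N *ᵥ v) := by
    rw [aux_symm_dp hN, dotProduct_comm]
  have key : ∀ t : ℝ, 0 ≤ (v ⬝ᵥ (N *ᵥ v)) * (t * t) + (2 * (u ⬝ᵥ (N *ᵥ v))) * t
      + u ⬝ᵥ (N *ᵥ u) := by
    intro t
    have h0 := hpsd (u + t • v)
    have he : (u + t • v) ⬝ᵥ (N *ᵥ (u + t • v)) =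
        (v ⬝ᵥ (N *ᵥ v)) * (t * t) + (2 * (u ⬝ᵥ (N *ᵥ v))) * t + u ⬝ᵥ (N *ᵥ u) := by
      rw [mulVec_add, mulVec_smul, add_dotProduct, smul_dotProduct,
        dotProduct_add, dotProduct_add, dotProduct_smul, dotProduct_smul, hsym]
      simp only [smul_eq_mul]
      ring
    rw [he] at h0
    linarith
  have hd := discrim_le_zero key
  rw [discrim] at hd
  nlinarith [hd]

/-- Squared bounds: if `a·|x|² ≤ xᵀNx ≤ b·|x|²` with `0 < a`, then
`a²·|x|² ≤ |Nx|² ≤ b²·|x|²`. -/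
lemma aux_sq_bounds {n : ℕ} {N : Matrix (Fin n) (Fin n) ℝ} (hN : N.IsSymm)
    {a b : ℝ} (ha : 0 < a)
    (hbd : ∀ x : Fin n → ℝ, a * (x ⬝ᵥ x) ≤ x ⬝ᵥ (N *ᵥ x) ∧ x ⬝ᵥ (N *ᵥ x) ≤ b * (x ⬝ᵥ x))
    (x : Fin n → ℝ) :
    a ^ 2 * (x ⬝ᵥ x) ≤ (N *ᵥ x) ⬝ᵥ (N *ᵥ x) ∧
      (N *ᵥ x) ⬝ᵥ (N *ᵥ x) ≤ b ^ 2 * (x ⬝ᵥ x) := by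
  have hpsd : ∀ u : Fin n → ℝ, 0 ≤ u ⬝ᵥ (N *ᵥ u) := fun u =>
    le_trans (mul_nonneg ha.le (aux_dp_self_nonneg u)) (hbd u).1
  have hp0 : 0 ≤ x ⬝ᵥ x := aux_dp_self_nonneg x
  have hr0 : 0 ≤ (N *ᵥ x) ⬝ᵥ (N *ᵥ x) := aux_dp_self_nonneg _
  have hq1 : a * (x ⬝ᵥ x) ≤ x ⬝ᵥ (N *ᵥ x) := (hbd x).1
  have hq2 : x ⬝ᵥ (N *ᵥ x) ≤ b * (x ⬝ᵥ x) := (hbd x).2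
  have hq0 : 0 ≤ x ⬝ᵥ (N *ᵥ x) := hpsd x
  have cs1 : (x ⬝ᵥ (N *ᵥ x)) ^ 2 ≤ (x ⬝ᵥ x) * ((N *ᵥ x) ⬝ᵥ (N *ᵥ x)) := aux_cs x (N *ᵥ x)
  have cs2 := aux_psd_cs hN hpsd x (N *ᵥ x)
  have hxNNx : x ⬝ᵥ (N *ᵥ (N *ᵥ x)) = (N *ᵥ x) ⬝ᵥ (N *ᵥ x) := by rw [aux_symm_dp hN]
  have hNx_bd : (N *ᵥ x) ⬝ᵥ (N *ᵥ (N *ᵥ x)) ≤ b * ((N *ᵥ x) ⬝ᵥ (N *ᵥ x)) := by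
    simpa [hxNNx] using (hbd (N *ᵥ x)).2
  rw [hxNNx] at cs2
  have hrbq : (N *ᵥ x) ⬝ᵥ (N *ᵥ x) ≤ b * (x ⬝ᵥ (N *ᵥ x)) := by
    rcases eq_or_lt_of_le hr0 with h0 | h0
    · have hq' : x ⬝ᵥ (N *ᵥ x) = 0 := by
        have h2 : (x ⬝ᵥ (N *ᵥ x)) ^ 2 = 0 :=
          le_antisymm (by nlinarith) (sq_nonneg _)
        exact sq_eq_zero_iff.mp h2
      rw [hq', mul_zero, ← h0]
    · have hchain : ((N *ᵥ x) ⬝ᵥ (N *ᵥ x)) ^ 2 ≤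
          (x ⬝ᵥ (N *ᵥ x)) * (b * ((N *ᵥ x) ⬝ᵥ (N *ᵥ x))) :=
        le_trans cs2 (mul_le_mul_of_nonneg_left hNx_bd hq0)
      nlinarith [hchain, h0]
  constructor
  · rcases eq_or_lt_of_le hp0 with h0 | h0
    · have hx0 : x = 0 := dotProduct_self_eq_zero.mp h0.symm
      subst hx0
      simp
    · nlinarith [cs1, mul_self_le_mul_self (mul_nonneg ha.le hp0) hq1, h0]
  · rcases eq_or_lt_of_le hp0 with h0 | h0
    · have hx0 : x = 0 := dotProduct_self_eq_zero.mp h0.symm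
      subst hx0
      simp
    · have hb0 : 0 ≤ b := by nlinarith
      nlinarith [hrbq, mul_le_mul_of_nonneg_left hq2 hb0]

/-- Inverse bounds: if `a·|x|² ≤ xᵀNx ≤ b·|x|²` with `0 < a`, `N` symmetric and invertible,
then `(1/b)·|y|² ≤ yᵀN⁻¹y ≤ (1/a)·|y|²`. -/
lemma aux_inv_bounds {n : ℕ} {N : Matrix (Fin n) (Fin n) ℝ} (hN : N.IsSymm)
    {a b : ℝ} (ha : 0 < a) (hdet : IsUnit N.det)
    (hbd : ∀ x : Fin n → ℝ, a * (x ⬝ᵥ x) ≤ x ⬝ᵥ (N *ᵥ x) ∧ x ⬝ᵥ (N *ᵥ x) ≤ b * (x ⬝ᵥ x))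
    (y : Fin n → ℝ) :
    (1 / b) * (y ⬝ᵥ y) ≤ y ⬝ᵥ (N⁻¹ *ᵥ y) ∧ y ⬝ᵥ (N⁻¹ *ᵥ y) ≤ (1 / a) * (y ⬝ᵥ y) := by
  have hpsd : ∀ u : Fin n → ℝ, 0 ≤ u ⬝ᵥ (N *ᵥ u) := fun u =>
    le_trans (mul_nonneg ha.le (aux_dp_self_nonneg u)) (hbd u).1
  set z := N⁻¹ *ᵥ y with hz
  have hyz : N *ᵥ z = y := by
    rw [hz, mulVec_mulVec, Matrix.mul_nonsing_inv _ hdet, one_mulVec]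
  have hval : y ⬝ᵥ z = z ⬝ᵥ (N *ᵥ z) := by
    conv_lhs => rw [← hyz]
    rw [← aux_symm_dp hN]
  have hreq : y ⬝ᵥ y = (N *ᵥ z) ⬝ᵥ (N *ᵥ z) := by rw [hyz]
  have hp0 : 0 ≤ z ⬝ᵥ z := aux_dp_self_nonneg z
  have hr0 : 0 ≤ y ⬝ᵥ y := aux_dp_self_nonneg y
  have hq0 : 0 ≤ z ⬝ᵥ (N *ᵥ z) := hpsd z
  have hq1 : a * (z ⬝ᵥ z) ≤ z ⬝ᵥ (N *ᵥ z) := (hbd z).1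
  have cs1 : (z ⬝ᵥ (N *ᵥ z)) ^ 2 ≤ (z ⬝ᵥ z) * (y ⬝ᵥ y) := by
    rw [hreq]; exact aux_cs z (N *ᵥ z)
  have cs2 : (y ⬝ᵥ y) ^ 2 ≤ (z ⬝ᵥ (N *ᵥ z)) * ((N *ᵥ z) ⬝ᵥ (N *ᵥ (N *ᵥ z))) := by
    have := aux_psd_cs hN hpsd z (N *ᵥ z)
    rwa [aux_symm_dp hN z (N *ᵥ z), ← hreq] at this
  have hNz_bd : (N *ᵥ z) ⬝ᵥ (N *ᵥ (N *ᵥ z)) ≤ b * (y ⬝ᵥ y) := by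
    have := (hbd (N *ᵥ z)).2
    rwa [← hreq] at this
  rw [hval]
  constructor
  · -- (1/b) * (y⬝ᵥy) ≤ z⬝ᵥNz
    rcases eq_or_lt_of_le hr0 with h0 | h0
    · rw [← h0, mul_zero]; exact hq0
    · have hy0 : y ≠ 0 := by
        intro hy; rw [hy] at h0; simp at h0
      have hb : 0 < b := by
        have h1 := (hbd y).1
        have h2 := (hbd y).2
        nlinarith
      rw [one_div_mul_eq_div, div_le_iff₀ hb]
      have hchain : (y ⬝ᵥ y) ^ 2 ≤ (z ⬝ᵥ (N *ᵥ z)) * (b * (y ⬝ᵥ y)) :=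
        le_trans cs2 (mul_le_mul_of_nonneg_left hNz_bd hq0)
      nlinarith [hchain, h0]
  · -- z⬝ᵥNz ≤ (1/a) * (y⬝ᵥy)
    rcases eq_or_lt_of_le hq0 with h0 | h0
    · have hpz : z ⬝ᵥ z = 0 := le_antisymm (by nlinarith) hp0
      have hz0 : z = 0 := dotProduct_self_eq_zero.mp hpz
      have hy0 : y = 0 := by rw [← hyz, hz0, mulVec_zero]
      rw [← h0, hy0]
      simp
    · rw [one_div_mul_eq_div, le_div_iff₀ ha]
      nlinarith [cs1, mul_le_mul_of_nonneg_right hq1 hr0, h0]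

/-- Under the standard finite element spectral estimates
`c₃h² ≤ xᵀMx/xᵀx ≤ c₄h²` and `d₁h² ≤ xᵀKx/xᵀx ≤ d₂` for symmetric `K`, `M`, the matrices
`M` and `K` are invertible and `(d₁²/c₄)h² ≤ xᵀ K M⁻¹ K x / xᵀx ≤ (d₂²/c₃)h⁻²`. -/
theorem rayleigh_quotient_KMinvK_bounds
    (n : ℕ) (h : ℝ) (hh : 0 < h)
    (K M : Matrix (Fin n) (Fin n) ℝ) (hK : K.IsSymm) (hM : M.IsSymm)
    (c₃ c₄ d₁ d₂ : ℝ) (hc₃ : 0 < c₃) (hc₄ : 0 < c₄) (hd₁ : 0 < d₁) (hd₂ : 0 < d₂)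
    (hMbound : ∀ x : Fin n → ℝ, x ≠ 0 →
      c₃ * h ^ 2 ≤ (x ⬝ᵥ (M *ᵥ x)) / (x ⬝ᵥ x) ∧ (x ⬝ᵥ (M *ᵥ x)) / (x ⬝ᵥ x) ≤ c₄ * h ^ 2)
    (hKbound : ∀ x : Fin n → ℝ, x ≠ 0 →
      d₁ * h ^ 2 ≤ (x ⬝ᵥ (K *ᵥ x)) / (x ⬝ᵥ x) ∧ (x ⬝ᵥ (K *ᵥ x)) / (x ⬝ᵥ x) ≤ d₂) :
    IsUnit M.det ∧ IsUnit K.det ∧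
    ∀ x : Fin n → ℝ, x ≠ 0 →
      (d₁ ^ 2 / c₄) * h ^ 2 ≤ (x ⬝ᵥ ((K * M⁻¹ * K) *ᵥ x)) / (x ⬝ᵥ x) ∧
      (x ⬝ᵥ ((K * M⁻¹ * K) *ᵥ x)) / (x ⬝ᵥ x) ≤ (d₂ ^ 2 / c₃) * h⁻¹ ^ 2 := by
  have hM' : ∀ x : Fin n → ℝ,
      (c₃ * h ^ 2) * (x ⬝ᵥ x) ≤ x ⬝ᵥ (M *ᵥ x) ∧
        x ⬝ᵥ (M *ᵥ x) ≤ (c₄ * h ^ 2) * (x ⬝ᵥ x) := by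
    intro x
    by_cases hx : x = 0
    · subst hx; simp
    · have hp := aux_dp_self_pos hx
      obtain ⟨h1, h2⟩ := hMbound x hx
      exact ⟨(le_div_iff₀ hp).mp h1, (div_le_iff₀ hp).mp h2⟩
  have hK' : ∀ x : Fin n → ℝ,
      (d₁ * h ^ 2) * (x ⬝ᵥ x) ≤ x ⬝ᵥ (K *ᵥ x) ∧
        x ⬝ᵥ (K *ᵥ x) ≤ d₂ * (x ⬝ᵥ x) := by
    intro x
    by_cases hx : x = 0
    · subst hx; simp
    · have hp := aux_dp_self_pos hx
      obtain ⟨h1, h2⟩ := hKbound x hx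
      exact ⟨(le_div_iff₀ hp).mp h1, (div_le_iff₀ hp).mp h2⟩
  have hch : 0 < c₃ * h ^ 2 := by positivity
  have hdh : 0 < d₁ * h ^ 2 := by positivity
  have hMherm : M.IsHermitian := by
    rwa [Matrix.IsHermitian, Matrix.conjTranspose_eq_transpose_of_trivial]
  have hKherm : K.IsHermitian := by
    rwa [Matrix.IsHermitian, Matrix.conjTranspose_eq_transpose_of_trivial]
  have hMPD : M.PosDef := by
    refine Matrix.posDef_iff_dotProduct_mulVec.mpr ⟨hMherm, fun x hx => ?_⟩
    rw [star_trivial]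
    exact lt_of_lt_of_le (mul_pos hch (aux_dp_self_pos hx)) (hM' x).1
  have hKPD : K.PosDef := by
    refine Matrix.posDef_iff_dotProduct_mulVec.mpr ⟨hKherm, fun x hx => ?_⟩
    rw [star_trivial]
    exact lt_of_lt_of_le (mul_pos hdh (aux_dp_self_pos hx)) (hK' x).1
  have hMdet : IsUnit M.det := hMPD.det_pos.ne'.isUnit
  have hKdet : IsUnit K.det := hKPD.det_pos.ne'.isUnit
  refine ⟨hMdet, hKdet, fun x hx => ?_⟩
  have hp : 0 < x ⬝ᵥ x := aux_dp_self_pos hx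
  have hyb := aux_sq_bounds hK hdh hK' x
  have hib := aux_inv_bounds hM hch hMdet hM' (K *ᵥ x)
  have hVeq : x ⬝ᵥ ((K * M⁻¹ * K) *ᵥ x) = (K *ᵥ x) ⬝ᵥ (M⁻¹ *ᵥ (K *ᵥ x)) := by
    rw [← mulVec_mulVec, ← mulVec_mulVec, aux_symm_dp hK]
  rw [hVeq]
  constructor
  · rw [le_div_iff₀ hp]
    calc (d₁ ^ 2 / c₄) * h ^ 2 * (x ⬝ᵥ x)
        = (1 / (c₄ * h ^ 2)) * ((d₁ * h ^ 2) ^ 2 * (x ⬝ᵥ x)) := by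
          field_simp
      _ ≤ (1 / (c₄ * h ^ 2)) * ((K *ᵥ x) ⬝ᵥ (K *ᵥ x)) := by
          apply mul_le_mul_of_nonneg_left hyb.1
          positivity
      _ ≤ (K *ᵥ x) ⬝ᵥ (M⁻¹ *ᵥ (K *ᵥ x)) := hib.1
  · rw [div_le_iff₀ hp]
    calc (K *ᵥ x) ⬝ᵥ (M⁻¹ *ᵥ (K *ᵥ x))
        ≤ (1 / (c₃ * h ^ 2)) * ((K *ᵥ x) ⬝ᵥ (K *ᵥ x)) := hib.2
      _ ≤ (1 / (c₃ * h ^ 2)) * (d₂ ^ 2 * (x ⬝ᵥ x)) := by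
          apply mul_le_mul_of_nonneg_left hyb.2
          positivity
      _ = (d₂ ^ 2 / c₃) * h⁻¹ ^ 2 * (x ⬝ᵥ x) := by
          field_simp
end

section
/- Let n be a natural number, h and β positive real numbers, K and M symmetric real n×n matrices, and c₁, c₂, c₃, c₄, d₁, d₂ positive real constants such that c₃h² ≤ (xᵀ M x)/(xᵀ x) ≤ c₄h² and d₁h² ≤ (xᵀ K x)/(xᵀ x) ≤ d₂ for all nonzero x ∈ ℝⁿ. Let M_γ be a symmetric positive semidefinite real n×n matrix, set K_M = K⁻¹ M K⁻¹, and suppose μ₀ ∈ ℝ and x ∈ ℝⁿ is a nonzero vector with (I + (1/β)·K_M M_γ)x = μ₀·x and c₁h ≤ (xᵀ M_γ x)/(xᵀ x) ≤ c₂h. Then 1 + (c₁c₃/d₂²)·h³/β ≤ μ₀ ≤ 1 + (c₂c₄/d₁²)·h⁻¹/β. -/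
open Matrix

set_option maxHeartbeats 1000000
open Matrix

section Helpers
variable {n : ℕ}

lemma symm_dot (A : Matrix (Fin n) (Fin n) ℝ) (hA : A.IsSymm) (u v : Fin n → ℝ) :
    u ⬝ᵥ (A *ᵥ v) = v ⬝ᵥ (A *ᵥ u) := by
  rw [Matrix.dotProduct_mulVec, ← Matrix.mulVec_transpose, hA, dotProduct_comm]

lemma psd_cs (A : Matrix (Fin n) (Fin n) ℝ) (hA : A.IsSymm)
    (hpsd : ∀ v, 0 ≤ v ⬝ᵥ (A *ᵥ v)) (u v : Fin n → ℝ) :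
    (u ⬝ᵥ (A *ᵥ v))^2 ≤ (u ⬝ᵥ (A *ᵥ u)) * (v ⬝ᵥ (A *ᵥ v)) := by
  have key : ∀ t : ℝ, 0 ≤ (v ⬝ᵥ (A *ᵥ v)) * (t*t) + (2 * (u ⬝ᵥ (A *ᵥ v))) * t + (u ⬝ᵥ (A *ᵥ u)) := by
    intro t
    have h0 := hpsd (u + t • v)
    have e : (u + t • v) ⬝ᵥ (A *ᵥ (u + t • v)) =
        (v ⬝ᵥ (A *ᵥ v)) * (t*t) + (2 * (u ⬝ᵥ (A *ᵥ v))) * t + (u ⬝ᵥ (A *ᵥ u)) := by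
      simp [Matrix.mulVec_add, Matrix.mulVec_smul, dotProduct_add, add_dotProduct,
        dotProduct_smul, smul_dotProduct, symm_dot A hA v u, smul_eq_mul]
      ring
    rw [e] at h0; linarith
  have hd := discrim_le_zero key
  simp [discrim] at hd
  nlinarith [hd]

lemma cs1 (u v : Fin n → ℝ) : (u ⬝ᵥ v)^2 ≤ (u ⬝ᵥ u) * (v ⬝ᵥ v) := by
  have := psd_cs (1 : Matrix (Fin n) (Fin n) ℝ) (Matrix.isSymm_one)
    (fun w => by
      simp only [Matrix.one_mulVec]
      exact Finset.sum_nonneg fun i _ => mul_self_nonneg _) u v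
  simpa [Matrix.one_mulVec] using this

lemma dot_self_pos {v : Fin n → ℝ} (hv : v ≠ 0) : 0 < v ⬝ᵥ v := by
  have h0 : 0 ≤ v ⬝ᵥ v := Finset.sum_nonneg fun i _ => mul_self_nonneg _
  rcases h0.lt_or_eq with h | h
  · exact h
  · exact absurd (dotProduct_self_eq_zero.mp h.symm) hv

end Helpers


/-- Proposition 3.1 eigenvalue bound. Under the finite element spectral
estimates on `K` and `M`, for `K_M = K⁻¹ M K⁻¹`, a positive semidefinite `M_γ` and a
nonzero eigenvector `x` with `(I + (1/β)·K_M M_γ)x = μ₀ x` satisfying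
`c₁h ≤ xᵀM_γx/xᵀx ≤ c₂h`, the eigenvalue satisfies
`1 + (c₁c₃/d₂²)h³/β ≤ μ₀ ≤ 1 + (c₂c₄/d₁²)h⁻¹/β`. -/
theorem eigenvalue_interval_bound
    (n : ℕ) (h β : ℝ) (hh : 0 < h) (hβ : 0 < β)
    (K M : Matrix (Fin n) (Fin n) ℝ) (hK : K.IsSymm) (hM : M.IsSymm)
    (c₁ c₂ c₃ c₄ d₁ d₂ : ℝ)
    (hc₁ : 0 < c₁) (hc₂ : 0 < c₂) (hc₃ : 0 < c₃) (hc₄ : 0 < c₄)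
    (hd₁ : 0 < d₁) (hd₂ : 0 < d₂)
    (hMbound : ∀ x : Fin n → ℝ, x ≠ 0 →
      c₃ * h ^ 2 ≤ (x ⬝ᵥ (M *ᵥ x)) / (x ⬝ᵥ x) ∧ (x ⬝ᵥ (M *ᵥ x)) / (x ⬝ᵥ x) ≤ c₄ * h ^ 2)
    (hKbound : ∀ x : Fin n → ℝ, x ≠ 0 →
      d₁ * h ^ 2 ≤ (x ⬝ᵥ (K *ᵥ x)) / (x ⬝ᵥ x) ∧ (x ⬝ᵥ (K *ᵥ x)) / (x ⬝ᵥ x) ≤ d₂)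
    (Mγ : Matrix (Fin n) (Fin n) ℝ) (hMγ : Mγ.PosSemidef)
    (μ₀ : ℝ) (x : Fin n → ℝ) (hx : x ≠ 0)
    (heig : (1 + (1 / β) • ((K⁻¹ * M * K⁻¹) * Mγ)) *ᵥ x = μ₀ • x)
    (hMγx : c₁ * h ≤ (x ⬝ᵥ (Mγ *ᵥ x)) / (x ⬝ᵥ x) ∧
      (x ⬝ᵥ (Mγ *ᵥ x)) / (x ⬝ᵥ x) ≤ c₂ * h) :
    1 + (c₁ * c₃ / d₂ ^ 2) * h ^ 3 / β ≤ μ₀ ∧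
    μ₀ ≤ 1 + (c₂ * c₄ / d₁ ^ 2) * h⁻¹ / β := by
  classical
  -- Rayleigh bounds in product form
  have hMlow : ∀ v : Fin n → ℝ, c₃ * h ^ 2 * (v ⬝ᵥ v) ≤ v ⬝ᵥ (M *ᵥ v) := by
    intro v
    by_cases hv : v = 0
    · simp [hv]
    · have hvv := dot_self_pos hv
      have := (hMbound v hv).1
      rw [le_div_iff₀ hvv] at this; linarith
  have hMhigh : ∀ v : Fin n → ℝ, v ⬝ᵥ (M *ᵥ v) ≤ c₄ * h ^ 2 * (v ⬝ᵥ v) := by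
    intro v
    by_cases hv : v = 0
    · simp [hv]
    · have hvv := dot_self_pos hv
      have := (hMbound v hv).2
      rw [div_le_iff₀ hvv] at this; linarith
  have hKlow : ∀ v : Fin n → ℝ, d₁ * h ^ 2 * (v ⬝ᵥ v) ≤ v ⬝ᵥ (K *ᵥ v) := by
    intro v
    by_cases hv : v = 0
    · simp [hv]
    · have hvv := dot_self_pos hv
      have := (hKbound v hv).1
      rw [le_div_iff₀ hvv] at this; linarith
  have hKhigh : ∀ v : Fin n → ℝ, v ⬝ᵥ (K *ᵥ v) ≤ d₂ * (v ⬝ᵥ v) := by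
    intro v
    by_cases hv : v = 0
    · simp [hv]
    · have hvv := dot_self_pos hv
      have := (hKbound v hv).2
      rw [div_le_iff₀ hvv] at this; linarith
  have hKpsd : ∀ v : Fin n → ℝ, 0 ≤ v ⬝ᵥ (K *ᵥ v) := by
    intro v
    refine le_trans ?_ (hKlow v)
    have : 0 ≤ v ⬝ᵥ v := Finset.sum_nonneg fun i _ => mul_self_nonneg _
    positivity
  -- K is positive definite, hence invertible
  have hKherm : K.IsHermitian := by
    rw [Matrix.IsHermitian, Matrix.conjTranspose]
    ext i j; simpa using congrFun (congrFun (show Kᵀ = K from hK) i) j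
  have hKpd : K.PosDef := by
    refine Matrix.posDef_iff_dotProduct_mulVec.mpr ⟨hKherm, fun v hv => ?_⟩
    have h1 := hKlow v
    have h2 := dot_self_pos hv
    have : 0 < d₁ * h ^ 2 * (v ⬝ᵥ v) := by positivity
    simpa [star_trivial] using lt_of_lt_of_le this h1
  have hKdet : IsUnit K.det := hKpd.det_pos.ne'.isUnit
  have hKKinv : K * K⁻¹ = 1 := Matrix.mul_nonsing_inv K hKdet
  have hKinvSymm : (K⁻¹).IsSymm := by
    rw [Matrix.IsSymm, Matrix.transpose_nonsing_inv, hK]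
  -- vectors
  set y : Fin n → ℝ := Mγ *ᵥ x with hy_def
  set z : Fin n → ℝ := K⁻¹ *ᵥ y with hz_def
  set w : Fin n → ℝ := K⁻¹ *ᵥ x with hw_def
  have hKz : K *ᵥ z = y := by
    rw [hz_def, Matrix.mulVec_mulVec, hKKinv, Matrix.one_mulVec]
  have hKw : K *ᵥ w = x := by
    rw [hw_def, Matrix.mulVec_mulVec, hKKinv, Matrix.one_mulVec]
  set s : ℝ := x ⬝ᵥ x with hs_def
  set g : ℝ := x ⬝ᵥ y with hg_def
  have hsx : 0 < s := dot_self_pos hx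
  have hg1 : c₁ * h * s ≤ g := by
    have := hMγx.1
    rw [le_div_iff₀ hsx] at this; linarith
  have hg2 : g ≤ c₂ * h * s := by
    have := hMγx.2
    rw [div_le_iff₀ hsx] at this; linarith
  have hgpos : 0 < g := lt_of_lt_of_le (by positivity) hg1
  have hy0 : y ≠ 0 := by
    intro hy
    rw [hg_def, hy] at hgpos
    simp at hgpos
  have hz0 : z ≠ 0 := by
    intro hz
    apply hy0
    rw [← hKz, hz, Matrix.mulVec_zero]
  have hw0 : w ≠ 0 := by
    intro hw
    apply hx
    rw [← hKw, hw, Matrix.mulVec_zero]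
  -- eigen equation rewritten
  set a : ℝ := β * (μ₀ - 1) with ha_def
  have heq : (K⁻¹ * M * K⁻¹) *ᵥ y = a • x := by
    have h1 : x + (1 / β) • ((K⁻¹ * M * K⁻¹) *ᵥ y) = μ₀ • x := by
      rw [hy_def, Matrix.mulVec_mulVec, ← heig, Matrix.add_mulVec, Matrix.one_mulVec,
        Matrix.smul_mulVec]
    funext i
    have h2 := congrFun h1 i
    simp only [Pi.add_apply, Pi.smul_apply, smul_eq_mul] at h2 ⊢
    rw [ha_def]
    set e := ((K⁻¹ * M * K⁻¹) *ᵥ y) i with he_def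
    have hβ' : β ≠ 0 := hβ.ne'
    field_simp at h2
    linear_combination h2
  -- congruence identity
  have hcongr : ∀ v : Fin n → ℝ, v ⬝ᵥ ((K⁻¹ * M * K⁻¹) *ᵥ v) =
      (K⁻¹ *ᵥ v) ⬝ᵥ (M *ᵥ (K⁻¹ *ᵥ v)) := by
    intro v
    rw [← Matrix.mulVec_mulVec, ← Matrix.mulVec_mulVec,
      symm_dot K⁻¹ hKinvSymm v (M *ᵥ (K⁻¹ *ᵥ v)), dotProduct_comm]
  have hKMsymm : (K⁻¹ * M * K⁻¹).IsSymm := by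
    rw [Matrix.IsSymm, Matrix.transpose_mul, Matrix.transpose_mul, hM, hKinvSymm]
    rw [Matrix.mul_assoc]
  have hKMpsd : ∀ v : Fin n → ℝ, 0 ≤ v ⬝ᵥ ((K⁻¹ * M * K⁻¹) *ᵥ v) := by
    intro v
    rw [hcongr v]
    refine le_trans ?_ (hMlow _)
    have : 0 ≤ (K⁻¹ *ᵥ v) ⬝ᵥ (K⁻¹ *ᵥ v) := Finset.sum_nonneg fun i _ => mul_self_nonneg _
    positivity
  -- key scalar identity: a * g = z ⬝ᵥ M z
  have hag : a * g = z ⬝ᵥ (M *ᵥ z) := by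
    have h1 : y ⬝ᵥ ((K⁻¹ * M * K⁻¹) *ᵥ y) = z ⬝ᵥ (M *ᵥ z) := by
      rw [hcongr y, ← hz_def]
    rw [← h1, heq, dotProduct_smul, smul_eq_mul, hg_def, dotProduct_comm]
  -- quantities
  set q : ℝ := z ⬝ᵥ z with hq_def
  set t : ℝ := z ⬝ᵥ y with ht_def
  set r : ℝ := y ⬝ᵥ y with hr_def
  have hqpos : 0 < q := dot_self_pos hz0
  have hrpos : 0 < r := dot_self_pos hy0
  have ht1 : d₁ * h ^ 2 * q ≤ t := by
    have := hKlow z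
    rwa [hKz, ← ht_def, ← hq_def] at this
  have ht2 : t ≤ d₂ * q := by
    have := hKhigh z
    rwa [hKz, ← ht_def, ← hq_def] at this
  -- r ≤ d₂ * t
  have hzKy : z ⬝ᵥ (K *ᵥ y) = r := by
    rw [symm_dot K hK z y, hKz, ← hr_def]
  have csK := psd_cs K hK hKpsd z y
  rw [hzKy, hKz, ← ht_def] at csK
  have hyKy := hKhigh y
  rw [← hr_def] at hyKy
  have htpos : 0 < t := lt_of_lt_of_le (by positivity) ht1
  have hr_le : r ≤ d₂ * t := by
    have e1 : t * (y ⬝ᵥ (K *ᵥ y)) ≤ t * (d₂ * r) := mul_le_mul_of_nonneg_left hyKy htpos.le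
    nlinarith only [csK, e1, hrpos]
  have hr_q : r ≤ d₂ ^ 2 * q := by nlinarith only [hr_le, ht2, hd₂.le]
  -- t² ≤ q r and hence d₁²h⁴ q ≤ r
  have ht_cs : t ^ 2 ≤ q * r := by
    have := cs1 z y
    rwa [← ht_def, ← hq_def, ← hr_def] at this
  have hq_up : d₁ ^ 2 * h ^ 4 * q ≤ r := by
    have e1 : (d₁ * h ^ 2 * q) ^ 2 ≤ t ^ 2 := pow_le_pow_left₀ (by positivity) ht1 2
    nlinarith only [e1, ht_cs, hqpos]
  -- r ≥ c₁ h g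
  have hg_cs : g ^ 2 ≤ s * r := by
    have := cs1 x y
    rwa [← hg_def, ← hs_def, ← hr_def] at this
  have hr_g : c₁ * h * g ≤ r := by nlinarith only [hg_cs, hg1, hsx, hgpos]
  -- lower bound on a
  have hMz_low := hMlow z
  rw [← hq_def] at hMz_low
  have key_low : c₁ * c₃ * h ^ 3 * g ≤ a * g * d₂ ^ 2 := by
    have B1 : c₃ * h ^ 2 * r ≤ c₃ * h ^ 2 * (d₂ ^ 2 * q) :=
      mul_le_mul_of_nonneg_left hr_q (by positivity)
    have B2 : c₃ * h ^ 2 * (c₁ * h * g) ≤ c₃ * h ^ 2 * r :=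
      mul_le_mul_of_nonneg_left hr_g (by positivity)
    have B3 : c₃ * h ^ 2 * q * d₂ ^ 2 ≤ a * g * d₂ ^ 2 := by
      rw [hag]; exact mul_le_mul_of_nonneg_right hMz_low (by positivity)
    nlinarith only [B1, B2, B3]
  have ha_low : c₁ * c₃ / d₂ ^ 2 * h ^ 3 ≤ a := by
    rw [div_mul_eq_mul_div, div_le_iff₀ (by positivity : (0:ℝ) < d₂ ^ 2)]
    have := le_of_mul_le_mul_right (by nlinarith only [key_low] : c₁ * c₃ * h ^ 3 * g ≤ a * d₂ ^ 2 * g) hgpos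
    linarith
  have ha_pos : 0 < a := lt_of_lt_of_le (by positivity) ha_low
  -- upper bound on a
  have csKM := psd_cs (K⁻¹ * M * K⁻¹) hKMsymm hKMpsd x y
  have hxKMy : x ⬝ᵥ ((K⁻¹ * M * K⁻¹) *ᵥ y) = a * s := by
    rw [heq, dotProduct_smul, smul_eq_mul, ← hs_def]
  have hyKMy : y ⬝ᵥ ((K⁻¹ * M * K⁻¹) *ᵥ y) = a * g := by
    rw [hcongr y, ← hz_def, ← hag]
  have hxKMx : x ⬝ᵥ ((K⁻¹ * M * K⁻¹) *ᵥ x) = w ⬝ᵥ (M *ᵥ w) := by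
    rw [hcongr x, ← hw_def]
  rw [hxKMy, hyKMy, hxKMx] at csKM
  -- bound x ⬝ KM x
  have hwpos : 0 < w ⬝ᵥ w := dot_self_pos hw0
  set W : ℝ := w ⬝ᵥ w with hW_def
  set u : ℝ := w ⬝ᵥ x with hu_def
  have hMw_high := hMhigh w
  rw [← hW_def] at hMw_high
  -- d₁²h⁴ (w⬝w) ≤ s
  have htw1 : d₁ * h ^ 2 * W ≤ u := by
    have := hKlow w
    rwa [hKw, ← hW_def, ← hu_def] at this
  have htw_cs : u ^ 2 ≤ W * s := by
    have := cs1 w x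
    rwa [← hW_def, ← hu_def, ← hs_def] at this
  have hw_up : d₁ ^ 2 * h ^ 4 * W ≤ s := by
    have e1 : (d₁ * h ^ 2 * W) ^ 2 ≤ u ^ 2 := pow_le_pow_left₀ (by positivity) htw1 2
    nlinarith only [e1, htw_cs, hwpos]
  -- combine: (a s)^2 <= (c4 h^2 W)(a c2 h s) together with d1^2 h^4 W <= s
  have hwnn : 0 ≤ W := hwpos.le
  have A1 : (a * s) ^ 2 ≤ (c₄ * h ^ 2 * W) * (a * (c₂ * h * s)) := by
    refine csKM.trans (mul_le_mul hMw_high ?_ ?_ (by positivity))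
    · exact mul_le_mul_of_nonneg_left hg2 ha_pos.le
    · positivity
  have C : a ^ 2 * s ^ 2 * (d₁ ^ 2 * h ^ 4) ≤ a * c₂ * c₄ * h ^ 3 * s ^ 2 := by
    have e2 : (c₄ * h ^ 2 * W) * (a * (c₂ * h * s)) * (d₁ ^ 2 * h ^ 4)
        ≤ (c₄ * h ^ 2 * (a * (c₂ * h * s))) * s := by
      have := mul_le_mul_of_nonneg_left hw_up
        (show (0:ℝ) ≤ c₄ * h ^ 2 * (a * (c₂ * h * s)) by positivity)
      nlinarith only [this]
    have e3 := mul_le_mul_of_nonneg_right A1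
      (show (0:ℝ) ≤ d₁ ^ 2 * h ^ 4 by positivity)
    nlinarith only [e2, e3]
  have hfinal : a * (d₁ ^ 2 * h) ≤ c₂ * c₄ := by
    have hpos : 0 < a * s ^ 2 * h ^ 3 := by positivity
    nlinarith only [C, hpos]
  have ha_up : a ≤ c₂ * c₄ / d₁ ^ 2 * h⁻¹ := by
    have hEq : c₂ * c₄ / d₁ ^ 2 * h⁻¹ = c₂ * c₄ / (d₁ ^ 2 * h) := by ring
    rw [hEq, le_div_iff₀ (by positivity : (0:ℝ) < d₁ ^ 2 * h)]
    exact hfinal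
  -- conclude
  have hmu : μ₀ = 1 + a / β := by
    rw [ha_def]; field_simp; ring
  constructor
  · rw [hmu]
    have e : c₁ * c₃ / d₂ ^ 2 * h ^ 3 / β ≤ a / β := by gcongr
    linarith
  · rw [hmu]
    have e : a / β ≤ c₂ * c₄ / d₁ ^ 2 * h⁻¹ / β := by gcongr
    linarith
end
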